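/- If S is a k-metric basis of the corona product G⊙H (G connected of order n ≥ 2, all H_i connected non-trivial), then S contains no vertex of G, i.e., S ∩ V(G) = ∅. -/
import Mathlib


open SimpleGraph

/-- `S` is a `k`-metric generator for `G`: every pair of distinct vertices is
distinguished (has different distances) by at least `k` vertices of `S`. -/
def kMetricGen {V : Type*} [Fintype V] (G : SimpleGraph V) (k : ℕ) (S : Set V) : Prop :=
  ∀ u v : V, u ≠ v → ∃ T : Finset V, ↑T ⊆ S ∧ k ≤ T.card ∧ ∀ w ∈ T, G.dist u w ≠ G.dist v w

/-- `G` is `k`-metric dimensional: `k` is the largest integer admitting a `k`-metric generator. -/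
def kMetricDimensional {V : Type*} [Fintype V] (G : SimpleGraph V) (k : ℕ) : Prop :=
  (∃ S : Set V, kMetricGen G k S) ∧ ∀ k' : ℕ, (∃ S : Set V, kMetricGen G k' S) → k' ≤ k

/-- The `k`-metric dimension of `G`. -/
noncomputable def kMetricDim {V : Type*} [Fintype V] (G : SimpleGraph V) (k : ℕ) : ℕ :=
  sInf {m | ∃ S : Finset V, kMetricGen G k ↑S ∧ S.card = m}

/-- A `k`-metric basis: a minimum-cardinality `k`-metric generator. -/
def kMetricBasis {V : Type*} [Fintype V] (G : SimpleGraph V) (k : ℕ) (B : Finset V) : Prop :=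
  kMetricGen G k ↑B ∧ ∀ T : Finset V, kMetricGen G k ↑T → B.card ≤ T.card

/-- Auxiliary relation for the corona product. -/
def coronaRel {V : Type*} {W : V → Type*} (G : SimpleGraph V) (H : ∀ v, SimpleGraph (W v)) :
    (V ⊕ (Σ v, W v)) → (V ⊕ (Σ v, W v)) → Prop
  | Sum.inl a, Sum.inl b => G.Adj a b
  | Sum.inl a, Sum.inr b => a = b.1
  | Sum.inr a, Sum.inr b => ∃ h : a.1 = b.1, (H b.1).Adj (h ▸ a.2) b.2
  | _, _ => False

/-- The corona product `G ⊙ 𝓗`: one copy of `G`, and each vertex `v` of `G` joined by an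
edge to every vertex of its own copy of `H v`. -/
def corona {V : Type*} {W : V → Type*} (G : SimpleGraph V) (H : ∀ v, SimpleGraph (W v)) :
    SimpleGraph (V ⊕ (Σ v, W v)) :=
  SimpleGraph.fromRel (coronaRel G H)

/-- The join `K₁ + H`: a new vertex (`none`) adjacent to every vertex of `H`. -/
def K1join {U : Type*} (H : SimpleGraph U) : SimpleGraph (Option U) :=
  SimpleGraph.fromRel (fun x y => match x, y with
    | none, some _ => True
    | some a, some b => H.Adj a b
    | _, _ => False)

/-- `𝒞(H) = min_{x ≠ y} |(N(x) △ N(y)) ∪ {x,y}|`. -/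
noncomputable def CC {U : Type*} (H : SimpleGraph U) : ℕ :=
  sInf {m | ∃ x y : U, x ≠ y ∧
    (symmDiff (H.neighborSet x) (H.neighborSet y) ∪ {x, y}).ncard = m}

section helpers

open Sum

variable {V : Type*} {W : V → Type*} (G : SimpleGraph V) (H : ∀ v, SimpleGraph (W v))

lemma corona_adj_inl_inr (a : V) (u : W a) : (corona G H).Adj (inl a) (inr ⟨a, u⟩) := by
  rw [corona, fromRel_adj]
  exact ⟨by simp, Or.inl rfl⟩

def toCorona : G →g corona G H where
  toFun := inl
  map_rel' := by
    intro a b h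
    rw [corona, fromRel_adj]
    exact ⟨by simpa using h.ne, Or.inl h⟩

lemma corona_connected [Nonempty V] (hG : G.Connected) : (corona G H).Connected := by
  have key : ∀ x : V ⊕ (Σ v, W v), ∃ b : V, (corona G H).Reachable x (inl b) := by
    intro x
    cases x with
    | inl b => exact ⟨b, Reachable.refl _⟩
    | inr p => exact ⟨p.1, (corona_adj_inl_inr G H p.1 p.2).symm.reachable⟩
  constructor
  · intro x y
    obtain ⟨b, hb⟩ := key x
    obtain ⟨c, hc⟩ := key y
    exact hb.trans (((hG.preconnected b c).map (toCorona G H)).trans hc.symm)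

lemma corona_walk_length (a : V) :
    ∀ {s z : V ⊕ (Σ v, W v)} (p : (corona G H).Walk s z),
      (∀ u : W a, z ≠ inr ⟨a, u⟩) → z ≠ inl a → ∀ u : W a, s = inr ⟨a, u⟩ →
      (corona G H).dist z (inl a) + 1 ≤ p.length := by
  intro s z p
  induction p with
  | nil =>
    intro hz _ u hs
    exact absurd hs (hz u)
  | @cons s t z h q ih =>
    intro hz hza u hs
    subst hs
    rw [corona, fromRel_adj] at h
    obtain ⟨hne, hrel⟩ := h
    cases t with
    | inl b =>
      have hba : b = a := by
        rcases hrel with h1 | h1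
        · exact h1.elim
        · exact h1
      subst hba
      have := (corona G H).dist_le q
      rw [SimpleGraph.Walk.length_cons]
      rw [SimpleGraph.dist_comm]
      omega
    | inr p =>
      obtain ⟨b, w⟩ := p
      have hba : b = a := by
        rcases hrel with ⟨h1, _⟩ | ⟨h1, _⟩
        · exact h1.symm
        · exact h1
      subst hba
      have := ih hz hza w rfl
      rw [SimpleGraph.Walk.length_cons]
      omega

lemma corona_dist_inr (hGc : (corona G H).Connected) {a : V} {z : V ⊕ (Σ v, W v)}
    (hz : ∀ u : W a, z ≠ inr ⟨a, u⟩) (hza : z ≠ inl a) (u : W a) :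
    (corona G H).dist z (inr ⟨a, u⟩) = (corona G H).dist z (inl a) + 1 := by
  apply le_antisymm
  · calc (corona G H).dist z (inr ⟨a, u⟩)
        ≤ (corona G H).dist z (inl a) + (corona G H).dist (inl a) (inr ⟨a, u⟩) :=
          hGc.dist_triangle
      _ = (corona G H).dist z (inl a) + 1 := by
          rw [SimpleGraph.dist_eq_one_iff_adj.2 (corona_adj_inl_inr G H a u)]
  · obtain ⟨p, hp⟩ := hGc.exists_walk_length_eq_dist (inr ⟨a, u⟩) z
    have h1 := corona_walk_length G H a p hz hza u rfl
    rw [hp] at h1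
    rwa [SimpleGraph.dist_comm (u := inr ⟨a, u⟩) (v := z)] at h1

lemma corona_dist_inr_le_two (hGc : (corona G H).Connected) (a : V) (w u : W a) :
    (corona G H).dist (inr ⟨a, w⟩) (inr ⟨a, u⟩) ≤ 2 := by
  calc (corona G H).dist (inr ⟨a, w⟩) (inr ⟨a, u⟩)
      ≤ (corona G H).dist (inr ⟨a, w⟩) (inl a) + (corona G H).dist (inl a) (inr ⟨a, u⟩) :=
        hGc.dist_triangle
    _ ≤ 2 := by
        rw [SimpleGraph.dist_comm (u := (inr ⟨a, w⟩ : V ⊕ (Σ v, W v))) (v := inl a),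
          SimpleGraph.dist_eq_one_iff_adj.2 (corona_adj_inl_inr G H a w),
          SimpleGraph.dist_eq_one_iff_adj.2 (corona_adj_inl_inr G H a u)]

end helpers

/-- a `k`-metric basis of a corona product contains no vertex of `G`. -/
theorem stmt_14 {V : Type*} [Fintype V] (hn : 2 ≤ Fintype.card V) {W : V → Type*}
    [∀ v, Fintype (W v)] [∀ v, Nontrivial (W v)] (G : SimpleGraph V) (hG : G.Connected)
    (H : ∀ v, SimpleGraph (W v)) (hH : ∀ v, (H v).Connected) (k : ℕ)
    (B : Finset (V ⊕ (Σ v, W v))) (hB : kMetricBasis (corona G H) k B) :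
    ∀ a : V, Sum.inl a ∉ B := by
  classical
  intro a ha
  have hnodes : Nontrivial V := Fintype.one_lt_card_iff_nontrivial.mp hn
  have hne : Nonempty V := inferInstance
  have hGc : (corona G H).Connected := corona_connected G H hG
  set d := (corona G H).dist with hd
  -- every copy contains at least k elements of B
  have copyk : ∀ c : V, k ≤ (B.filter (fun z => ∃ u : W c, z = Sum.inr ⟨c, u⟩)).card := by
    intro c
    obtain ⟨u, u', huu⟩ := exists_pair_ne (W c)
    have hpair : (Sum.inr ⟨c, u⟩ : V ⊕ (Σ v, W v)) ≠ Sum.inr ⟨c, u'⟩ := by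
      simp [huu]
    obtain ⟨T, hTB, hTk, hTd⟩ := hB.1 _ _ hpair
    refine hTk.trans (Finset.card_le_card ?_)
    intro z hz
    rw [Finset.mem_filter]
    refine ⟨hTB hz, ?_⟩
    by_contra hc
    push_neg at hc
    apply hTd z hz
    by_cases hzc : z = Sum.inl c
    · subst hzc
      rw [SimpleGraph.dist_comm (u := (Sum.inr ⟨c, u⟩ : V ⊕ (Σ v, W v))),
        SimpleGraph.dist_comm (u := (Sum.inr ⟨c, u'⟩ : V ⊕ (Σ v, W v))),
        SimpleGraph.dist_eq_one_iff_adj.2 (corona_adj_inl_inr G H c u),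
        SimpleGraph.dist_eq_one_iff_adj.2 (corona_adj_inl_inr G H c u')]
    · rw [SimpleGraph.dist_comm (u := (Sum.inr ⟨c, u⟩ : V ⊕ (Σ v, W v))),
        SimpleGraph.dist_comm (u := (Sum.inr ⟨c, u'⟩ : V ⊕ (Σ v, W v))),
        corona_dist_inr G H hGc hc hzc u, corona_dist_inr G H hGc hc hzc u']
  -- distance from inl a to copies
  have D1 : ∀ (c : V) (u : W c), d (Sum.inl c) (Sum.inr ⟨c, u⟩) = 1 := fun c u =>
    SimpleGraph.dist_eq_one_iff_adj.2 (corona_adj_inl_inr G H c u)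
  -- the case x = inl a
  have mainA : ∀ y : V ⊕ (Σ v, W v), y ≠ Sum.inl a →
      ∃ c : V, ∀ u : W c, d (Sum.inl a) (Sum.inr ⟨c, u⟩) ≠ d y (Sum.inr ⟨c, u⟩) := by
    intro y hy
    by_cases hyc : ∃ w : W a, y = Sum.inr ⟨a, w⟩
    · obtain ⟨w, rfl⟩ := hyc
      obtain ⟨b, hb⟩ := exists_ne a
      refine ⟨b, fun u => ?_⟩
      have hzc : ∀ u' : W a, (Sum.inr ⟨b, u⟩ : V ⊕ (Σ v, W v)) ≠ Sum.inr ⟨a, u'⟩ := by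
        intro u' hcon
        exact hb (congrArg (fun z => Sum.elim id Sigma.fst z) hcon)
      have hzl : (Sum.inr ⟨b, u⟩ : V ⊕ (Σ v, W v)) ≠ Sum.inl a := by simp
      have h1 : d (Sum.inr ⟨a, w⟩) (Sum.inr ⟨b, u⟩)
          = d (Sum.inr ⟨b, u⟩) (Sum.inl a) + 1 := by
        rw [hd, SimpleGraph.dist_comm (u := (Sum.inr ⟨a, w⟩ : V ⊕ (Σ v, W v)))]
        exact corona_dist_inr G H hGc hzc hzl w
      have h2 : d (Sum.inl a) (Sum.inr ⟨b, u⟩) = d (Sum.inr ⟨b, u⟩) (Sum.inl a) :=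
        SimpleGraph.dist_comm
      omega
    · push_neg at hyc
      refine ⟨a, fun u => ?_⟩
      have h1 := D1 a u
      have h2 : d y (Sum.inr ⟨a, u⟩) = d y (Sum.inl a) + 1 :=
        corona_dist_inr G H hGc hyc hy u
      have h3 : 1 ≤ d y (Sum.inl a) := hGc.pos_dist_of_ne hy
      omega
  -- mixed case : x in copy a, y outside copy a and not inl a, d y (inl a) ≠ 1
  have mixed : ∀ (w : W a) (y : V ⊕ (Σ v, W v)), y ≠ Sum.inl a →
      (∀ u : W a, y ≠ Sum.inr ⟨a, u⟩) → d y (Sum.inl a) ≠ 1 →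
      ∀ u : W a, d (Sum.inr ⟨a, w⟩) (Sum.inr ⟨a, u⟩) ≠ d y (Sum.inr ⟨a, u⟩) := by
    intro w y hy hyc hyd u
    have h1 : d (Sum.inr ⟨a, w⟩) (Sum.inr ⟨a, u⟩) ≤ 2 := corona_dist_inr_le_two G H hGc a w u
    have h2 : d y (Sum.inr ⟨a, u⟩) = d y (Sum.inl a) + 1 := corona_dist_inr G H hGc hyc hy u
    have h3 : 1 ≤ d y (Sum.inl a) := hGc.pos_dist_of_ne hy
    omega
  -- the main claim : any pair distinguished by inl a is distinguished by a full copy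
  have main : ∀ x y : V ⊕ (Σ v, W v), d x (Sum.inl a) ≠ d y (Sum.inl a) →
      ∃ c : V, ∀ u : W c, d x (Sum.inr ⟨c, u⟩) ≠ d y (Sum.inr ⟨c, u⟩) := by
    intro x y hdxy
    have hxyne : x ≠ y := fun h => hdxy (by rw [h])
    by_cases hxA : x = Sum.inl a
    · subst hxA
      exact mainA y (Ne.symm hxyne)
    by_cases hyA : y = Sum.inl a
    · subst hyA
      obtain ⟨c, hc⟩ := mainA x hxA
      exact ⟨c, fun u => (hc u).symm⟩
    -- both differ from inl a
    by_cases hxc : ∃ w : W a, x = Sum.inr ⟨a, w⟩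
    · obtain ⟨w, rfl⟩ := hxc
      by_cases hyc : ∃ w' : W a, y = Sum.inr ⟨a, w'⟩
      · obtain ⟨w', rfl⟩ := hyc
        exfalso
        apply hdxy
        rw [hd, SimpleGraph.dist_comm (u := (Sum.inr ⟨a, w⟩ : V ⊕ (Σ v, W v))),
          SimpleGraph.dist_comm (u := (Sum.inr ⟨a, w'⟩ : V ⊕ (Σ v, W v))),
          SimpleGraph.dist_eq_one_iff_adj.2 (corona_adj_inl_inr G H a w), SimpleGraph.dist_eq_one_iff_adj.2 (corona_adj_inl_inr G H a w')]
      · push_neg at hyc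
        have hyd : d y (Sum.inl a) ≠ 1 := by
          intro hcon
          apply hdxy
          rw [hcon, hd, SimpleGraph.dist_comm (u := (Sum.inr ⟨a, w⟩ : V ⊕ (Σ v, W v)))]
          exact SimpleGraph.dist_eq_one_iff_adj.2 (corona_adj_inl_inr G H a w)
        exact ⟨a, mixed w y hyA hyc hyd⟩
    · push_neg at hxc
      by_cases hyc : ∃ w' : W a, y = Sum.inr ⟨a, w'⟩
      · obtain ⟨w', rfl⟩ := hyc
        have hxd : d x (Sum.inl a) ≠ 1 := by
          intro hcon
          apply hdxy
          rw [hcon, hd, SimpleGraph.dist_comm (u := (Sum.inr ⟨a, w'⟩ : V ⊕ (Σ v, W v)))]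
          exact (SimpleGraph.dist_eq_one_iff_adj.2 (corona_adj_inl_inr G H a w')).symm
        exact ⟨a, fun u => (mixed w' x hxA hxc hxd u).symm⟩
      · push_neg at hyc
        refine ⟨a, fun u => ?_⟩
        have h1 : d x (Sum.inr ⟨a, u⟩) = d x (Sum.inl a) + 1 := corona_dist_inr G H hGc hxc hxA u
        have h2 : d y (Sum.inr ⟨a, u⟩) = d y (Sum.inl a) + 1 := corona_dist_inr G H hGc hyc hyA u
        omega
  -- B.erase (inl a) is still a k-metric generator
  have gen' : kMetricGen (corona G H) k ↑(B.erase (Sum.inl a)) := by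
    intro x y hxy
    obtain ⟨T, hTB, hTk, hTd⟩ := hB.1 x y hxy
    by_cases hT : Sum.inl a ∈ T
    · obtain ⟨c, hc⟩ := main x y (hTd _ hT)
      refine ⟨B.filter (fun z => ∃ u : W c, z = Sum.inr ⟨c, u⟩), ?_, copyk c, ?_⟩
      · intro z hz
        rw [Finset.mem_coe, Finset.mem_filter] at hz
        rw [Finset.mem_coe, Finset.mem_erase]
        obtain ⟨u, rfl⟩ := hz.2
        exact ⟨by simp, hz.1⟩
      · intro z hz
        rw [Finset.mem_filter] at hz
        obtain ⟨u, rfl⟩ := hz.2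
        exact hc u
    · refine ⟨T, ?_, hTk, hTd⟩
      intro z hz
      rw [Finset.mem_coe] at hz
      rw [Finset.mem_coe, Finset.mem_erase]
      exact ⟨fun h => hT (h ▸ hz), hTB hz⟩
  have := hB.2 _ gen'
  rw [Finset.card_erase_of_mem ha] at this
  have hpos : 0 < B.card := Finset.card_pos.mpr ⟨_, ha⟩
  omega
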